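/- For every continuous function f on a compact interval [a,b] with a < b and every ε > 0, there exist a natural number n and vectors α, β, w ∈ ℝⁿ such that sup_{x ∈ [a,b]} |Σ_{i=1}^n wᵢ σ(αᵢ x + βᵢ) − f(x)| < ε. -/

import Mathlib

/-!
A continuous function on `[a, b]` is uniformly continuous, so on a fine grid `a + k h` it is
within `ε / 4` of the staircase that jumps by `f (a + (k + 1) h) - f (a + k h)` at the midpoint
`a + (k + 1/2) h`. Replacing each jump by a steep sigmoid `σ (M (x - s))` with `M h = log N`
costs at most `exp (-M h) = 1 / N` times the jump height, except at the two jumps nearest to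
`x`, where it costs at most the jump height. With all jumps at most `ε / 4` the total error is
below `ε / 4 + N (ε / 4) / N + 2 (ε / 4) < ε`.
-/

noncomputable def sigmoid (z : ℝ) : ℝ := 1 / (1 + Real.exp (-z))

open Finset

theorem sigmoid_eq_real_sigmoid : sigmoid = Real.sigmoid := by
  funext z
  rw [sigmoid, Real.sigmoid_def, one_div]

theorem sigmoid_zero : sigmoid 0 = 1 / 2 := by
  rw [sigmoid_eq_real_sigmoid, Real.sigmoid_zero, one_div]

theorem sigmoid_le_exp (z : ℝ) : sigmoid z ≤ Real.exp z := by
  rw [sigmoid_eq_real_sigmoid, ← neg_neg z, ← Real.sigmoid_mul_rexp_neg]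
  exact mul_le_of_le_one_left (Real.exp_pos _).le (Real.sigmoid_le_one _)

theorem one_sub_sigmoid_le_exp (z : ℝ) : 1 - sigmoid z ≤ Real.exp (-z) := by
  have h := sigmoid_le_exp (-z)
  rw [sigmoid_eq_real_sigmoid, Real.sigmoid_neg] at h
  rwa [sigmoid_eq_real_sigmoid]

noncomputable def heaviside (z : ℝ) : ℝ := if 0 ≤ z then 1 else 0

theorem abs_sigmoid_sub_heaviside_le_one (y z : ℝ) : |sigmoid y - heaviside z| ≤ 1 := by
  have h0 := Real.sigmoid_nonneg y
  have h1 := Real.sigmoid_le_one y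
  rw [← sigmoid_eq_real_sigmoid] at h0 h1
  unfold heaviside
  split_ifs <;> rw [abs_le] <;> constructor <;> linarith

theorem abs_sigmoid_mul_sub_heaviside_le (L z : ℝ) :
    |sigmoid (L * z) - heaviside z| ≤ Real.exp (-(L * |z|)) := by
  have h0 := Real.sigmoid_nonneg (L * z)
  have h1 := Real.sigmoid_le_one (L * z)
  rw [← sigmoid_eq_real_sigmoid] at h0 h1
  unfold heaviside
  split_ifs with hz
  · rw [abs_of_nonneg hz, abs_sub_comm, abs_of_nonneg (by linarith)]
    exact one_sub_sigmoid_le_exp _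
  · rw [abs_of_neg (not_le.mp hz), sub_zero, abs_of_nonneg h0, mul_neg, neg_neg]
    exact sigmoid_le_exp _

theorem sum_le_card_mul_add_card {ι : Type*} [DecidableEq ι] (s E : Finset ι) {g : ι → ℝ}
    {r : ℝ} (hr : 0 ≤ r) (hg : ∀ i ∈ s, g i ≤ 1) (hgr : ∀ i ∈ s, i ∉ E → g i ≤ r) :
    ∑ i ∈ s, g i ≤ #s * r + #E := by
  calc ∑ i ∈ s, g i ≤ ∑ i ∈ s, (r + if i ∈ E then 1 else 0) := by
        refine sum_le_sum fun i hi => ?_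
        split_ifs with hiE
        · linarith [hg i hi]
        · linarith [hgr i hi hiE]
    _ = #s * r + #(s.filter fun i => i ∈ E) := by
        rw [sum_add_distrib, sum_const, nsmul_eq_mul, sum_boole]
    _ ≤ #s * r + #E := by
        rw [filter_mem_eq_inter]
        gcongr
        exact inter_subset_right

theorem sum_range_ite_lt_sub {G : Type*} [AddCommGroup G] (p : ℕ → G) {j N : ℕ} (hjN : j ≤ N) :
    ∑ k ∈ range N, (if k < j then p (k + 1) - p k else 0) = p j - p 0 := by
  rw [← sum_filter, ← sum_range_sub]
  congr 1
  ext k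
  simp only [mem_filter, mem_range]
  omega

theorem nat_floor_add_half_le {u : ℝ} {N : ℕ} (huN : u ≤ N) : ⌊u + 1 / 2⌋₊ ≤ N :=
  Nat.lt_succ_iff.mp <| (Nat.floor_lt' N.succ_ne_zero).mpr <| by push_cast; linarith

theorem abs_nat_floor_add_half_sub_le {u : ℝ} (hu : 0 ≤ u) :
    |(⌊u + 1 / 2⌋₊ : ℝ) - u| ≤ 1 / 2 := by
  have h₁ := Nat.floor_le (a := u + 1 / 2) (by positivity)
  have h₂ := Nat.lt_floor_add_one (u + 1 / 2)
  rw [abs_le]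
  constructor <;> linarith

theorem heaviside_sub_add_half {u : ℝ} (hu : 0 ≤ u) (k : ℕ) :
    heaviside (u - (k + 1 / 2)) = if k < ⌊u + 1 / 2⌋₊ then 1 else 0 := by
  refine if_congr ?_ rfl rfl
  rw [← Nat.succ_le_iff, Nat.le_floor_iff (by positivity)]
  push_cast
  constructor <;> intro <;> linarith

theorem one_le_abs_sub_add_half {u : ℝ} (hu : 0 ≤ u) {k : ℕ} (hk : k ≠ ⌊u + 1 / 2⌋₊)
    (hk₁ : k + 1 ≠ ⌊u + 1 / 2⌋₊) : 1 ≤ |u - (k + 1 / 2)| := by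
  have h₁ := Nat.floor_le (a := u + 1 / 2) (by positivity)
  have h₂ := Nat.lt_floor_add_one (u + 1 / 2)
  rcases lt_or_gt_of_ne hk with hlt | hgt
  · have : (k : ℝ) + 2 ≤ ⌊u + 1 / 2⌋₊ := by exact_mod_cast (by omega : k + 2 ≤ ⌊u + 1 / 2⌋₊)
    rw [abs_of_nonneg (by linarith)]
    linarith
  · have : (⌊u + 1 / 2⌋₊ : ℝ) + 1 ≤ k := by exact_mod_cast hgt
    rw [abs_of_neg (by linarith)]
    linarith

theorem sum_abs_sigmoid_sub_heaviside_le {u L : ℝ} (hu : 0 ≤ u) (hL : 0 ≤ L) (N : ℕ) :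
    ∑ k ∈ range N, |sigmoid (L * (u - (k + 1 / 2))) - heaviside (u - (k + 1 / 2))| ≤
      N * Real.exp (-L) + 2 := by
  set j := ⌊u + 1 / 2⌋₊
  have hfar : ∀ k ∈ range N, k ∉ ({j - 1, j} : Finset ℕ) →
      |sigmoid (L * (u - (k + 1 / 2))) - heaviside (u - (k + 1 / 2))| ≤ Real.exp (-L) := by
    intro k _ hk
    simp only [mem_insert, mem_singleton, not_or] at hk
    have hz := one_le_abs_sub_add_half hu hk.2 (by omega)
    refine (abs_sigmoid_mul_sub_heaviside_le _ _).trans (Real.exp_le_exp.mpr ?_)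
    nlinarith
  calc _ ≤ #(range N) * Real.exp (-L) + #({j - 1, j} : Finset ℕ) :=
        sum_le_card_mul_add_card _ _ (Real.exp_pos _).le
          (fun _ _ => abs_sigmoid_sub_heaviside_le_one _ _) hfar
    _ ≤ N * Real.exp (-L) + 2 := by
        rw [card_range]
        gcongr
        exact_mod_cast card_le_two

theorem abs_staircase_sigmoid_sub_le (p : ℕ → ℝ) {N : ℕ} {η L u : ℝ} (hη : 0 ≤ η)
    (hjump : ∀ k < N, |p (k + 1) - p k| ≤ η) (hL : 0 ≤ L) (hu : 0 ≤ u) (huN : u ≤ N) :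
    |p 0 + ∑ k ∈ range N, (p (k + 1) - p k) * sigmoid (L * (u - (k + 1 / 2))) -
      p ⌊u + 1 / 2⌋₊| ≤ η * (N * Real.exp (-L) + 2) := by
  have hstep : ∑ k ∈ range N, (p (k + 1) - p k) * heaviside (u - (k + 1 / 2)) =
      p ⌊u + 1 / 2⌋₊ - p 0 := by
    rw [← sum_range_ite_lt_sub p (nat_floor_add_half_le huN)]
    refine sum_congr rfl fun k _ => ?_
    rw [heaviside_sub_add_half hu]
    split_ifs <;> simp
  calc _ = |∑ k ∈ range N, (p (k + 1) - p k) *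
          (sigmoid (L * (u - (k + 1 / 2))) - heaviside (u - (k + 1 / 2)))| := by
        simp only [mul_sub, sum_sub_distrib, hstep]
        ring_nf
    _ ≤ ∑ k ∈ range N, η * |sigmoid (L * (u - (k + 1 / 2))) - heaviside (u - (k + 1 / 2))| := by
        refine (abs_sum_le_sum_abs _ _).trans (sum_le_sum fun k hk => ?_)
        rw [abs_mul]
        gcongr
        exact hjump k (mem_range.mp hk)
    _ ≤ η * (N * Real.exp (-L) + 2) := by
        rw [← mul_sum]
        gcongr
        exact sum_abs_sigmoid_sub_heaviside_le hu hL N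

theorem exists_network_eq_const_add {N : ℕ} (c : ℝ) (α β w : Fin N → ℝ) :
    ∃ α' β' w' : Fin (N + 1) → ℝ, ∀ x, ∑ i, w' i * sigmoid (α' i * x + β' i) =
      c + ∑ i, w i * sigmoid (α i * x + β i) :=
  -- the extra neuron `2 c σ (0 * x + 0) = c` supplies the constant
  ⟨Fin.cons 0 α, Fin.cons 0 β, Fin.cons (2 * c) w, fun x => by
    simp only [Fin.sum_univ_succ, Fin.cons_zero, Fin.cons_succ, zero_mul, add_zero, sigmoid_zero]
    ring⟩

theorem exists_network_eq_staircase (a h L : ℝ) (p : ℕ → ℝ) (N : ℕ) :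
    ∃ α β w : Fin (N + 1) → ℝ, ∀ x, ∑ i, w i * sigmoid (α i * x + β i) =
      p 0 + ∑ k ∈ range N, (p (k + 1) - p k) * sigmoid (L * ((x - a) / h - (k + 1 / 2))) := by
  obtain ⟨α, β, w, hnet⟩ := exists_network_eq_const_add (p 0) (fun _ => L / h)
    (fun k => -(L * (a / h + (k + 1 / 2)))) (fun k => p (k + 1) - p k)
  refine ⟨α, β, w, fun x => ?_⟩
  rw [hnet, ← Fin.sum_univ_eq_sum_range]
  congr! 4
  ring

theorem exists_pos_nat_forall_abs_sub_lt {a b : ℝ} {f : ℝ → ℝ}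
    (hf : ContinuousOn f (Set.Icc a b)) {η : ℝ} (hη : 0 < η) :
    ∃ N : ℕ, 0 < N ∧ ∀ x ∈ Set.Icc a b, ∀ y ∈ Set.Icc a b,
      |x - y| ≤ (b - a) / N → |f x - f y| < η := by
  obtain ⟨δ, hδ, hfδ⟩ :=
    Metric.uniformContinuousOn_iff.mp (isCompact_Icc.uniformContinuousOn_of_continuous hf) η hη
  obtain ⟨N, hN⟩ := exists_nat_gt (max 0 ((b - a) / δ))
  have hN₀ : (0 : ℝ) < N := (le_max_left _ _).trans_lt hN
  refine ⟨N, by exact_mod_cast hN₀, fun x hx y hy hxy => hfδ x hx y hy (hxy.trans_lt ?_)⟩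
  rw [div_lt_iff₀ hN₀, mul_comm, ← div_lt_iff₀ hδ]
  exact (le_max_right _ _).trans_lt hN

theorem add_nat_mul_div_mem_Icc {a b : ℝ} (hab : a ≤ b) {k N : ℕ} (hkN : k ≤ N) :
    a + k * ((b - a) / N) ∈ Set.Icc a b := by
  rcases N.eq_zero_or_pos with rfl | hN
  · simp [hab]
  have hk : (k : ℝ) / N ≤ 1 := div_le_one_of_le₀ (by exact_mod_cast hkN) (Nat.cast_nonneg N)
  have hk₀ : 0 ≤ (k : ℝ) / N := by positivity
  rw [mul_div_left_comm, Set.mem_Icc]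
  constructor <;> nlinarith

theorem sub_div_div_mem_Icc {a b x : ℝ} (hab : a < b) {N : ℕ} (hN : 0 < N)
    (hx : x ∈ Set.Icc a b) : (x - a) / ((b - a) / N) ∈ Set.Icc (0 : ℝ) N := by
  have hN' : (0 : ℝ) < N := by exact_mod_cast hN
  rw [div_div_eq_mul_div, Set.mem_Icc, le_div_iff₀ (by linarith), div_le_iff₀ (by linarith)]
  constructor <;> nlinarith [hx.1, hx.2]

theorem abs_add_nat_floor_mul_sub_le {a h x : ℝ} (hh : 0 < h) (hax : a ≤ x) :
    |a + ⌊(x - a) / h + 1 / 2⌋₊ * h - x| ≤ h / 2 := by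
  have hu := abs_nat_floor_add_half_sub_le (div_nonneg (sub_nonneg.mpr hax) hh.le)
  have hxh : a + ⌊(x - a) / h + 1 / 2⌋₊ * h - x = (⌊(x - a) / h + 1 / 2⌋₊ - (x - a) / h) * h := by
    rw [sub_mul, div_mul_cancel₀ _ hh.ne']
    ring
  rw [hxh, abs_mul, abs_of_pos hh]
  nlinarith

/-- Uniform universal approximation: for every continuous function `f` on `[a,b]` and
every `ε > 0`, there is a single-hidden-layer sigmoid network uniformly within `ε` of `f`. -/
theorem elm_universal_approx_uniform (a b : ℝ) (hab : a < b) (f : ℝ → ℝ)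
    (hf : ContinuousOn f (Set.Icc a b)) (ε : ℝ) (hε : 0 < ε) :
    ∃ (n : ℕ) (α β w : Fin n → ℝ),
      ∀ x ∈ Set.Icc a b, |(∑ i, w i * sigmoid (α i * x + β i)) - f x| < ε := by
  obtain ⟨N, hN, hfN⟩ := exists_pos_nat_forall_abs_sub_lt hf (by positivity : 0 < ε / 4)
  set h := (b - a) / N
  have hh : 0 < h := div_pos (by linarith) (by exact_mod_cast hN)
  set p : ℕ → ℝ := fun k => f (a + k * h)
  have hgrid : ∀ k ≤ N, a + k * h ∈ Set.Icc a b := fun k hk => add_nat_mul_div_mem_Icc hab.le hk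
  have hjump : ∀ k < N, |p (k + 1) - p k| ≤ ε / 4 := fun k hk =>
    (hfN _ (hgrid (k + 1) hk) _ (hgrid k hk.le)
      (by rw [show a + ((k + 1 : ℕ) : ℝ) * h - (a + k * h) = h by push_cast; ring,
        abs_of_pos hh])).le
  have hNL : (N : ℝ) * Real.exp (-Real.log N) = 1 := by
    rw [Real.exp_neg, Real.exp_log (by exact_mod_cast hN)]
    exact mul_inv_cancel₀ (by exact_mod_cast hN.ne')
  obtain ⟨α, β, w, hnet⟩ := exists_network_eq_staircase a h (Real.log N) p N
  refine ⟨N + 1, α, β, w, fun x hx => ?_⟩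
  obtain ⟨hu, huN⟩ : (x - a) / h ∈ Set.Icc (0 : ℝ) N := sub_div_div_mem_Icc hab hN hx
  have hnear : |p ⌊(x - a) / h + 1 / 2⌋₊ - f x| < ε / 4 :=
    hfN _ (hgrid _ (nat_floor_add_half_le huN)) _ hx
      ((abs_add_nat_floor_mul_sub_le hh hx.1).trans (by linarith))
  have hstair := abs_staircase_sigmoid_sub_le p (by positivity) hjump
    (Real.log_natCast_nonneg N) hu huN
  rw [hNL] at hstair
  rw [hnet]
  exact (abs_sub_le _ (p ⌊(x - a) / h + 1 / 2⌋₊) _).trans_lt (by linarith)
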